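/- (Proposition 1) Under Assumptions 1–4, if the discretization scheme satisfies max_{1≤i≤d_N−1} |t_{i+1} − t_i|^{2β} = o(n^{-1}) as N → ∞, then there exists a constant C such that for all N, √n · E[sup_{t∈[0,T]} |μ̂_d(t) − μ_N(t)|] < C. -/

import Mathlib

open Finset MeasureTheory ProbabilityTheory Filter Topology

noncomputable section

/-- Expectation of `f` under a sampling design `p` on the population `{0, …, N-1}`. -/
def dExp (N : ℕ) (p : Finset ℕ → ℝ) (f : Finset ℕ → ℝ) : ℝ :=
  ∑ s ∈ (Finset.range N).powerset, p s * f s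

/-- Variance of `f` under the sampling design `p`. -/
def dVar (N : ℕ) (p : Finset ℕ → ℝ) (f : Finset ℕ → ℝ) : ℝ :=
  dExp N p (fun s => f s ^ 2) - dExp N p f ^ 2

/-- `p` is a fixed-size-`n` sampling design on the population `{0, …, N-1}`. -/
structure IsDesign (N n : ℕ) (p : Finset ℕ → ℝ) : Prop where
  nonneg : ∀ s, 0 ≤ p s
  sum_one : ∑ s ∈ (Finset.range N).powerset, p s = 1
  supp : ∀ s, p s ≠ 0 → s ⊆ Finset.range N ∧ s.card = n

/-- First-order inclusion probability `π_k`. -/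
def pi1 (N : ℕ) (p : Finset ℕ → ℝ) (k : ℕ) : ℝ :=
  dExp N p fun s => if k ∈ s then 1 else 0

/-- Second-order inclusion probability `π_{kl}` (it equals `π_k` on the diagonal). -/
def pi2 (N : ℕ) (p : Finset ℕ → ℝ) (k l : ℕ) : ℝ :=
  dExp N p fun s => if k ∈ s ∧ l ∈ s then 1 else 0

/-- `Δ_{kl} = π_{kl} - π_k π_l`; on the diagonal it equals `π_k (1 - π_k)`. -/
def Delta (N : ℕ) (p : Finset ℕ → ℝ) (k l : ℕ) : ℝ :=
  pi2 N p k l - pi1 N p k * pi1 N p l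

/-- Sample membership indicator `I_k`. -/
def ind (k : ℕ) (s : Finset ℕ) : ℝ := if k ∈ s then 1 else 0

/-- Population mean trajectory `μ_N`. -/
def popMean (N : ℕ) (Y : ℕ → ℝ → ℝ) (t : ℝ) : ℝ :=
  (N : ℝ)⁻¹ * ∑ k ∈ Finset.range N, Y k t

/-- Horvitz–Thompson estimator of the mean curve computed from the sample `s`. -/
def htMean (N : ℕ) (p : Finset ℕ → ℝ) (Y : ℕ → ℝ → ℝ) (s : Finset ℕ) (t : ℝ) : ℝ :=
  (N : ℝ)⁻¹ * ∑ k ∈ s, Y k t / pi1 N p k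

/-- Covariance function `γ_N(u,v)` of the Horvitz–Thompson estimator under the design. -/
def htCov (N : ℕ) (p : Finset ℕ → ℝ) (Y : ℕ → ℝ → ℝ) (u v : ℝ) : ℝ :=
  dExp N p (fun s => htMean N p Y s u * htMean N p Y s v) -
    dExp N p (fun s => htMean N p Y s u) * dExp N p (fun s => htMean N p Y s v)

/-- Horvitz–Thompson covariance estimator `γ̂(u,v)`. -/
def htCovEst (N : ℕ) (p : Finset ℕ → ℝ) (Y : ℕ → ℝ → ℝ) (s : Finset ℕ) (u v : ℝ) : ℝ :=
  ((N : ℝ) ^ 2)⁻¹ * ∑ k ∈ s, ∑ l ∈ s,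
    Y k u / pi1 N p k * (Y l v / pi1 N p l) * (Delta N p k l / pi2 N p k l)

/-- Mesh (largest gap) of a discretization grid `pts` with `d` subintervals. -/
def meshR (d : ℕ) (hd : 0 < d) (pts : Fin (d + 1) → ℝ) : ℝ :=
  Finset.univ.sup' (⟨⟨0, hd⟩, Finset.mem_univ _⟩ : (Finset.univ : Finset (Fin d)).Nonempty)
    fun i : Fin d => |pts i.succ - pts i.castSucc|


/-!
Write `μ̂_d - μ_N = (μ̂_d - μ̂) + (μ̂ - μ_N)`. The interpolation error `μ̂_d - μ̂` is bounded
pathwise: on a grid cell the interpolant is a convex combination of the two node values, so by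
Assumption 4 its mean absolute deviation is at most `2 √C₃ · mesh^β`, and `√n · mesh^β` stays
bounded by the mesh condition.

For the Horvitz–Thompson error we use the second-moment bound
`n · E[(μ̂ - μ_N)²] ≤ (λ⁻¹ + C₁ λ⁻²) · N⁻¹ Σ_k z_k²`, obtained by splitting the quadratic form
`Σ_{k,l} Δ_{kl} z_k z_l / (π_k π_l)` into its diagonal (`Δ_{kk} ≤ π_k`) and off-diagonal
(`|Δ_{kl}| ≤ C₁ / n`) parts, and chain along the dyadic grids of `[0, T]` down to level `n`.
Level `j` has `2^(j+1) + 1` links, each of size `O((T / 2^j)^β / √n)` in `L²`, so the `ℓ²` norm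
of all of them has expectation `O(2^(j/2) (T / 2^j)^β / √n)`, which sums geometrically because
`β > 1/2`; the gap between `t` and its level-`n` dyadic neighbour costs
`(T / 2^n)^β ≤ T^β / √n` deterministically.
-/

section DesignExpectation

variable {N n : ℕ} {p : Finset ℕ → ℝ}

theorem dExp_congr {f g : Finset ℕ → ℝ} (h : ∀ s, p s ≠ 0 → f s = g s) :
    dExp N p f = dExp N p g :=
  sum_congr rfl fun s _ => by rcases eq_or_ne (p s) 0 with h0 | h0 <;> simp [h0, h]

theorem dExp_mono (hp : ∀ s, 0 ≤ p s) {f g : Finset ℕ → ℝ} (h : ∀ s, p s ≠ 0 → f s ≤ g s) :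
    dExp N p f ≤ dExp N p g :=
  sum_le_sum fun s _ => by
    rcases eq_or_ne (p s) 0 with h0 | h0
    · simp [h0]
    · exact mul_le_mul_of_nonneg_left (h s h0) (hp s)

theorem dExp_add (f g : Finset ℕ → ℝ) :
    dExp N p (fun s => f s + g s) = dExp N p f + dExp N p g := by
  simp only [dExp, mul_add, sum_add_distrib]

theorem dExp_const_mul (c : ℝ) (f : Finset ℕ → ℝ) :
    dExp N p (fun s => c * f s) = c * dExp N p f := by
  simp only [dExp, mul_sum, mul_left_comm]

theorem dExp_sum {ι : Type*} (t : Finset ι) (f : ι → Finset ℕ → ℝ) :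
    dExp N p (fun s => ∑ i ∈ t, f i s) = ∑ i ∈ t, dExp N p (f i) := by
  simp only [dExp, mul_sum]
  exact sum_comm

theorem IsDesign.dExp_const (hd : IsDesign N n p) (c : ℝ) : dExp N p (fun _ => c) = c := by
  simp only [dExp, ← sum_mul, hd.sum_one, one_mul]

theorem IsDesign.card_le (hd : IsDesign N n p) : n ≤ N := by
  obtain ⟨s, -, hs⟩ := exists_ne_zero_of_sum_ne_zero (hd.sum_one ▸ one_ne_zero)
  obtain ⟨hsub, rfl⟩ := hd.supp s hs
  simpa using card_le_card hsub

theorem IsDesign.dExp_sqrt_le (hd : IsDesign N n p) {F : Finset ℕ → ℝ} (hF : ∀ s, 0 ≤ F s) :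
    dExp N p (fun s => √(F s)) ≤ √(dExp N p F) :=
  Real.strictConcaveOn_sqrt.concaveOn.le_map_sum (fun s _ => hd.nonneg s) hd.sum_one
    fun s _ => hF s

theorem IsDesign.dExp_abs_le (hd : IsDesign N n p) (f : Finset ℕ → ℝ) :
    dExp N p (fun s => |f s|) ≤ √(dExp N p (fun s => f s ^ 2)) := by
  simpa only [Real.sqrt_sq_eq_abs] using hd.dExp_sqrt_le fun s => sq_nonneg (f s)

theorem IsDesign.dExp_centered_mul (hd : IsDesign N n p) (k l : ℕ) :
    dExp N p (fun s => (ind k s - pi1 N p k) * (ind l s - pi1 N p l)) = Delta N p k l := by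
  have hind : ∀ k, dExp N p (fun s => ind k s) = pi1 N p k := fun _ => rfl
  have hkl : dExp N p (fun s => ind k s * ind l s) = pi2 N p k l :=
    sum_congr rfl fun s _ => by simp only [ind, ite_zero_mul_ite_zero, mul_one]
  have expand : ∀ s, (ind k s - pi1 N p k) * (ind l s - pi1 N p l) =
      ind k s * ind l s + (-pi1 N p k * ind l s + (-pi1 N p l * ind k s +
        pi1 N p k * pi1 N p l)) := fun s => by ring
  simp only [expand, dExp_add, dExp_const_mul, hd.dExp_const, hkl, hind, Delta]
  ring

end DesignExpectation

theorem sum_sum_mul_mul_le {ι : Type*} [DecidableEq ι] (t : Finset ι) (A : ι → ι → ℝ)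
    (x : ι → ℝ) {a b : ℝ} (hb : 0 ≤ b) (hdiag : ∀ k ∈ t, A k k ≤ a)
    (hoff : ∀ k ∈ t, ∀ l ∈ t, k ≠ l → |A k l| ≤ b) :
    ∑ k ∈ t, ∑ l ∈ t, x k * x l * A k l ≤ (a + #t * b) * ∑ k ∈ t, x k ^ 2 := by
  have hrow : ∀ k ∈ t, ∑ l ∈ t, x k * x l * A k l ≤ a * x k ^ 2 + b * ∑ l ∈ t, |x k| * |x l| := by
    intro k hk
    rw [← add_sum_erase t _ hk]
    gcongr ?_ + ?_
    · nlinarith [hdiag k hk, sq_nonneg (x k)]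
    · calc ∑ l ∈ t.erase k, x k * x l * A k l
          ≤ ∑ l ∈ t.erase k, b * (|x k| * |x l|) := sum_le_sum fun l hl => by
            have hAkl := hoff k hk l (mem_of_mem_erase hl) (ne_of_mem_erase hl).symm
            calc x k * x l * A k l ≤ |x k| * |x l| * |A k l| := by
                  rw [← abs_mul, ← abs_mul]; exact le_abs_self _
              _ ≤ |x k| * |x l| * b := by gcongr
              _ = b * (|x k| * |x l|) := mul_comm _ _
        _ ≤ b * ∑ l ∈ t, |x k| * |x l| := by
          rw [← mul_sum]
          exact mul_le_mul_of_nonneg_left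
            (sum_le_sum_of_subset_of_nonneg (erase_subset k t) fun _ _ _ => by positivity) hb
  calc ∑ k ∈ t, ∑ l ∈ t, x k * x l * A k l
      ≤ ∑ k ∈ t, (a * x k ^ 2 + b * ∑ l ∈ t, |x k| * |x l|) := sum_le_sum hrow
    _ = a * ∑ k ∈ t, x k ^ 2 + b * (∑ k ∈ t, |x k|) ^ 2 := by
      rw [sum_add_distrib, ← mul_sum, ← mul_sum, sq, sum_mul_sum]
    _ ≤ a * ∑ k ∈ t, x k ^ 2 + b * (#t * ∑ k ∈ t, x k ^ 2) := by
      gcongr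
      simpa only [sq_abs] using sq_sum_le_card_mul_sum_sq (s := t) (f := fun k => |x k|)
    _ = (a + #t * b) * ∑ k ∈ t, x k ^ 2 := by ring

section HorvitzThompson

variable {N n : ℕ} {p : Finset ℕ → ℝ}

def htErr (N : ℕ) (p : Finset ℕ → ℝ) (z : ℕ → ℝ) (s : Finset ℕ) : ℝ :=
  (N : ℝ)⁻¹ * ∑ k ∈ s, z k / pi1 N p k - (N : ℝ)⁻¹ * ∑ k ∈ range N, z k

def popMeanSq (N : ℕ) (z : ℕ → ℝ) : ℝ :=
  (N : ℝ)⁻¹ * ∑ k ∈ range N, z k ^ 2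

theorem popMeanSq_nonneg (N : ℕ) (z : ℕ → ℝ) : 0 ≤ popMeanSq N z :=
  mul_nonneg (inv_nonneg.2 N.cast_nonneg) (sum_nonneg fun _ _ => sq_nonneg _)

theorem htErr_sub (z w : ℕ → ℝ) (s : Finset ℕ) :
    htErr N p (fun k => z k - w k) s = htErr N p z s - htErr N p w s := by
  simp only [htErr, sub_div, sum_sub_distrib]
  ring

theorem htErr_eq_sum_centered {s : Finset ℕ} (hs : s ⊆ range N)
    (hπ : ∀ k ∈ range N, pi1 N p k ≠ 0) (z : ℕ → ℝ) :
    htErr N p z s = (N : ℝ)⁻¹ * ∑ k ∈ range N, z k / pi1 N p k * (ind k s - pi1 N p k) := by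
  have hsample : ∑ k ∈ s, z k / pi1 N p k = ∑ k ∈ range N, z k / pi1 N p k * ind k s := by
    simp only [ind, mul_ite, mul_one, mul_zero, sum_ite_mem, inter_eq_right.mpr hs]
  have hpop : ∑ k ∈ range N, z k = ∑ k ∈ range N, z k / pi1 N p k * pi1 N p k :=
    sum_congr rfl fun k hk => (div_mul_cancel₀ _ (hπ k hk)).symm
  rw [htErr, hsample, hpop, ← mul_sub, ← sum_sub_distrib]
  simp only [mul_sub]

theorem IsDesign.dExp_sq_sum_centered (hd : IsDesign N n p) (c : ℕ → ℝ) :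
    dExp N p (fun s => (∑ k ∈ range N, c k * (ind k s - pi1 N p k)) ^ 2) =
      ∑ k ∈ range N, ∑ l ∈ range N, c k * c l * Delta N p k l := by
  simp only [sq, sum_mul_sum, dExp_sum]
  refine sum_congr rfl fun k _ => sum_congr rfl fun l _ => ?_
  rw [← hd.dExp_centered_mul, ← dExp_const_mul]
  exact dExp_congr fun s _ => by ring

theorem IsDesign.dExp_htErr_sq (hd : IsDesign N n p) (hπ : ∀ k ∈ range N, pi1 N p k ≠ 0)
    (z : ℕ → ℝ) :
    dExp N p (fun s => htErr N p z s ^ 2) = (N : ℝ)⁻¹ ^ 2 *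
      ∑ k ∈ range N, ∑ l ∈ range N, z k * z l * (Delta N p k l / (pi1 N p k * pi1 N p l)) := by
  rw [dExp_congr fun s hs => by rw [htErr_eq_sum_centered (hd.supp s hs).1 hπ, mul_pow],
    dExp_const_mul, hd.dExp_sq_sum_centered]
  congr 1
  exact sum_congr rfl fun k _ => sum_congr rfl fun l _ => by ring

theorem Delta_self_div_le {lam : ℝ} (hlam : 0 < lam) {k : ℕ} (hπ : lam ≤ pi1 N p k) :
    Delta N p k k / (pi1 N p k * pi1 N p k) ≤ lam⁻¹ := by
  have hπ0 := hlam.trans_le hπ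
  have hΔ : Delta N p k k = pi1 N p k * (1 - pi1 N p k) := by
    rw [Delta, show pi2 N p k k = pi1 N p k by simp only [pi2, pi1, and_self]]; ring
  rw [hΔ, mul_div_mul_left _ _ hπ0.ne', div_le_iff₀ hπ0]
  nlinarith [inv_mul_cancel₀ hlam.ne', inv_pos.2 hlam]

theorem abs_natCast_mul_Delta_div_le {lam C₁ : ℝ} (hlam : 0 < lam) {k l : ℕ}
    (hk : lam ≤ pi1 N p k) (hl : lam ≤ pi1 N p l) (hΔ : (n : ℝ) * |Delta N p k l| ≤ C₁) :
    |n * (Delta N p k l / (pi1 N p k * pi1 N p l))| ≤ C₁ * lam⁻¹ ^ 2 := by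
  have hπk := hlam.trans_le hk
  have hπkl := mul_pos hπk (hlam.trans_le hl)
  have hC₁ : 0 ≤ C₁ := (mul_nonneg n.cast_nonneg (abs_nonneg _)).trans hΔ
  rw [abs_mul, abs_div, Nat.abs_cast, abs_of_pos hπkl, ← mul_div_assoc, div_le_iff₀ hπkl]
  calc _ ≤ C₁ := hΔ
    _ = C₁ * lam⁻¹ ^ 2 * (lam * lam) := by field_simp
    _ ≤ C₁ * lam⁻¹ ^ 2 * (pi1 N p k * pi1 N p l) := by gcongr

theorem IsDesign.natCast_mul_inv_le_one (hd : IsDesign N n p) : (n : ℝ) * (N : ℝ)⁻¹ ≤ 1 := by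
  rcases N.eq_zero_or_pos with rfl | hN
  · simp
  · rw [← div_eq_mul_inv, div_le_one (by exact_mod_cast hN)]
    exact_mod_cast hd.card_le

theorem IsDesign.natCast_mul_dExp_htErr_sq_le (hd : IsDesign N n p) {lam C₁ : ℝ} (hlam : 0 < lam)
    (hpi : ∀ k ∈ range N, lam ≤ pi1 N p k) (hC₁ : 0 ≤ C₁)
    (hΔ : ∀ k ∈ range N, ∀ l ∈ range N, k ≠ l → (n : ℝ) * |Delta N p k l| ≤ C₁) (z : ℕ → ℝ) :
    n * dExp N p (fun s => htErr N p z s ^ 2) ≤ (lam⁻¹ + C₁ * lam⁻¹ ^ 2) * popMeanSq N z := by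
  have hπ : ∀ k ∈ range N, pi1 N p k ≠ 0 := fun k hk => (hlam.trans_le (hpi k hk)).ne'
  set A : ℕ → ℕ → ℝ := fun k l => n * (Delta N p k l / (pi1 N p k * pi1 N p l))
  have hdiag : ∀ k ∈ range N, A k k ≤ n * lam⁻¹ := fun k hk => by
    simp only [A]; gcongr; exact Delta_self_div_le hlam (hpi k hk)
  have hoff : ∀ k ∈ range N, ∀ l ∈ range N, k ≠ l → |A k l| ≤ C₁ * lam⁻¹ ^ 2 :=
    fun k hk l hl hkl => abs_natCast_mul_Delta_div_le hlam (hpi k hk) (hpi l hl) (hΔ k hk l hl hkl)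
  calc n * dExp N p (fun s => htErr N p z s ^ 2)
      = (N : ℝ)⁻¹ ^ 2 * ∑ k ∈ range N, ∑ l ∈ range N, z k * z l * A k l := by
        rw [hd.dExp_htErr_sq hπ]
        simp only [mul_sum, A]
        exact sum_congr rfl fun k _ => sum_congr rfl fun l _ => by ring
    _ ≤ (N : ℝ)⁻¹ ^ 2 * ((n * lam⁻¹ + #(range N) * (C₁ * lam⁻¹ ^ 2)) *
          ∑ k ∈ range N, z k ^ 2) := by
        gcongr
        exact sum_sum_mul_mul_le _ A z (by positivity) hdiag hoff
    _ = (n * (N : ℝ)⁻¹ * lam⁻¹ + (N * (N : ℝ)⁻¹) * (C₁ * lam⁻¹ ^ 2)) * popMeanSq N z := by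
        rw [card_range, popMeanSq]; ring
    _ ≤ (lam⁻¹ + C₁ * lam⁻¹ ^ 2) * popMeanSq N z := by
        gcongr ?_ * _
        · exact popMeanSq_nonneg N z
        · exact add_le_add (mul_le_of_le_one_left (by positivity) hd.natCast_mul_inv_le_one)
            (mul_le_of_le_one_left (by positivity) mul_inv_le_one)

theorem IsDesign.sqrt_mul_dExp_abs_htErr_le (hd : IsDesign N n p) {lam C₁ : ℝ} (hlam : 0 < lam)
    (hpi : ∀ k ∈ range N, lam ≤ pi1 N p k) (hC₁ : 0 ≤ C₁)
    (hΔ : ∀ k ∈ range N, ∀ l ∈ range N, k ≠ l → (n : ℝ) * |Delta N p k l| ≤ C₁) (z : ℕ → ℝ) :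
    √n * dExp N p (fun s => |htErr N p z s|) ≤ √((lam⁻¹ + C₁ * lam⁻¹ ^ 2) * popMeanSq N z) := by
  calc √n * dExp N p (fun s => |htErr N p z s|)
      ≤ √n * √(dExp N p (fun s => htErr N p z s ^ 2)) := by gcongr; exact hd.dExp_abs_le _
    _ = √(n * dExp N p (fun s => htErr N p z s ^ 2)) := (Real.sqrt_mul (Nat.cast_nonneg n) _).symm
    _ ≤ _ := Real.sqrt_le_sqrt (hd.natCast_mul_dExp_htErr_sq_le hlam hpi hC₁ hΔ z)

end HorvitzThompson

section DeterministicBounds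

variable {N : ℕ} {p : Finset ℕ → ℝ} {lam : ℝ}

theorem mean_abs_le_sqrt_popMeanSq (N : ℕ) (w : ℕ → ℝ) :
    (N : ℝ)⁻¹ * ∑ k ∈ range N, |w k| ≤ √(popMeanSq N w) := by
  rw [Real.le_sqrt (by positivity) (popMeanSq_nonneg N w), popMeanSq]
  calc ((N : ℝ)⁻¹ * ∑ k ∈ range N, |w k|) ^ 2
      = (N : ℝ)⁻¹ ^ 2 * (∑ k ∈ range N, |w k|) ^ 2 := by ring
    _ ≤ (N : ℝ)⁻¹ ^ 2 * (N * ∑ k ∈ range N, w k ^ 2) := by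
      gcongr
      simpa only [sq_abs, card_range] using
        sq_sum_le_card_mul_sum_sq (s := range N) (f := fun k => |w k|)
    _ = ((N : ℝ)⁻¹ * N) * ((N : ℝ)⁻¹ * ∑ k ∈ range N, w k ^ 2) := by ring
    _ ≤ (N : ℝ)⁻¹ * ∑ k ∈ range N, w k ^ 2 :=
      mul_le_of_le_one_left (by positivity) inv_mul_le_one

theorem abs_htSum_le (hlam : 0 < lam) (hpi : ∀ k ∈ range N, lam ≤ pi1 N p k) {s : Finset ℕ}
    (hs : s ⊆ range N) (w : ℕ → ℝ) :
    |(N : ℝ)⁻¹ * ∑ k ∈ s, w k / pi1 N p k| ≤ lam⁻¹ * ((N : ℝ)⁻¹ * ∑ k ∈ range N, |w k|) := by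
  have hterm : ∀ k ∈ s, |w k / pi1 N p k| ≤ lam⁻¹ * |w k| := fun k hk => by
    have hπ := hpi k (hs hk)
    rw [abs_div, abs_of_pos (hlam.trans_le hπ), div_eq_mul_inv, mul_comm]
    gcongr
  rw [abs_mul, abs_of_nonneg (by positivity), mul_left_comm, mul_sum]
  gcongr
  calc |∑ k ∈ s, w k / pi1 N p k| ≤ ∑ k ∈ s, |w k / pi1 N p k| := abs_sum_le_sum_abs _ _
    _ ≤ ∑ k ∈ s, lam⁻¹ * |w k| := sum_le_sum hterm
    _ ≤ ∑ k ∈ range N, lam⁻¹ * |w k| :=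
      sum_le_sum_of_subset_of_nonneg hs fun _ _ _ => by positivity

theorem abs_htErr_le (hlam : 0 < lam) (hpi : ∀ k ∈ range N, lam ≤ pi1 N p k) {s : Finset ℕ}
    (hs : s ⊆ range N) (z : ℕ → ℝ) :
    |htErr N p z s| ≤ (1 + lam⁻¹) * √(popMeanSq N z) := by
  have hpop : |(N : ℝ)⁻¹ * ∑ k ∈ range N, z k| ≤ (N : ℝ)⁻¹ * ∑ k ∈ range N, |z k| := by
    rw [abs_mul, abs_of_nonneg (by positivity)]
    gcongr
    exact abs_sum_le_sum_abs _ _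
  have hmean := mean_abs_le_sqrt_popMeanSq N z
  calc |htErr N p z s| ≤ lam⁻¹ * ((N : ℝ)⁻¹ * ∑ k ∈ range N, |z k|) +
        (N : ℝ)⁻¹ * ∑ k ∈ range N, |z k| :=
      (abs_sub _ _).trans (add_le_add (abs_htSum_le hlam hpi hs z) hpop)
    _ ≤ lam⁻¹ * √(popMeanSq N z) + √(popMeanSq N z) := by gcongr
    _ = (1 + lam⁻¹) * √(popMeanSq N z) := by ring

end DeterministicBounds

-- Second half of Assumption 4, for the population of size `N`.
def HolderMeanSq (N : ℕ) (Y : ℕ → ℝ → ℝ) (T C₃ β : ℝ) : Prop :=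
  ∀ u ∈ Set.Icc 0 T, ∀ v ∈ Set.Icc 0 T,
    popMeanSq N (fun k => Y k v - Y k u) ≤ C₃ * |v - u| ^ (2 * β)

section Holder

variable {N : ℕ} {Y : ℕ → ℝ → ℝ} {T C₃ β : ℝ}

theorem HolderMeanSq.le_of_abs_sub_le (hY : HolderMeanSq N Y T C₃ β) (hC₃ : 0 ≤ C₃)
    (hβ : 0 ≤ β) {u v δ : ℝ} (hu : u ∈ Set.Icc 0 T) (hv : v ∈ Set.Icc 0 T) (h : |v - u| ≤ δ) :
    popMeanSq N (fun k => Y k v - Y k u) ≤ C₃ * δ ^ (2 * β) :=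
  (hY u hu v hv).trans (by gcongr)

theorem HolderMeanSq.popMeanSq_le (hY : HolderMeanSq N Y T C₃ β) {C₂ : ℝ}
    (hY0 : popMeanSq N (fun k => Y k 0) ≤ C₂) (hC₃ : 0 ≤ C₃) (hβ : 0 ≤ β) {t : ℝ}
    (ht : t ∈ Set.Icc 0 T) :
    popMeanSq N (fun k => Y k t) ≤ 2 * C₂ + 2 * (C₃ * T ^ (2 * β)) := by
  have hT : 0 ≤ T := ht.1.trans ht.2
  have hinc := hY.le_of_abs_sub_le hC₃ hβ (δ := T) (Set.left_mem_Icc.2 hT) ht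
    (by rw [sub_zero, abs_of_nonneg ht.1]; exact ht.2)
  have hsq : ∀ k, Y k t ^ 2 ≤ 2 * Y k 0 ^ 2 + 2 * (Y k t - Y k 0) ^ 2 := fun k => by
    nlinarith [sq_nonneg (Y k t - 2 * Y k 0)]
  calc popMeanSq N (fun k => Y k t)
      ≤ 2 * popMeanSq N (fun k => Y k 0) + 2 * popMeanSq N (fun k => Y k t - Y k 0) := by
        simp only [popMeanSq]
        calc (N : ℝ)⁻¹ * ∑ k ∈ range N, Y k t ^ 2
            ≤ (N : ℝ)⁻¹ * ∑ k ∈ range N, (2 * Y k 0 ^ 2 + 2 * (Y k t - Y k 0) ^ 2) := by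
              gcongr with k; exact hsq k
          _ = _ := by rw [sum_add_distrib, ← mul_sum, ← mul_sum]; ring
    _ ≤ 2 * C₂ + 2 * (C₃ * T ^ (2 * β)) := by gcongr

end Holder

def dyadicPt (T : ℝ) (j m : ℕ) : ℝ := m * T / 2 ^ j

def dyadicIdx (T t : ℝ) (j : ℕ) : ℕ := ⌊t * 2 ^ j / T⌋₊

-- The `ℓ²` norm of all level-`j` links dominates the link used by any single `t`; being
-- independent of `t`, it lets the supremum over `t` pass under the expectation.
def chainIncr (f : ℝ → ℝ) (T : ℝ) (j : ℕ) : ℝ :=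
  √(∑ m ∈ range (2 ^ (j + 1) + 1), (f (dyadicPt T (j + 1) m) - f (dyadicPt T j (m / 2))) ^ 2)

section Dyadic

variable {T t : ℝ}

theorem dyadicIdx_succ_div_two (T t : ℝ) (j : ℕ) :
    dyadicIdx T t (j + 1) / 2 = dyadicIdx T t j := by
  rw [dyadicIdx, dyadicIdx, ← Nat.floor_div_ofNat]
  congr 1
  ring

theorem dyadicIdx_le (hT : 0 < T) (ht : t ≤ T) (j : ℕ) : dyadicIdx T t j ≤ 2 ^ j := by
  refine Nat.floor_le_of_le ?_
  rw [div_le_iff₀ hT]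
  push_cast
  nlinarith [pow_pos (two_pos : (0 : ℝ) < 2) j]

theorem dyadicPt_mem_Icc (hT : 0 ≤ T) {j m : ℕ} (hm : m ≤ 2 ^ j) :
    dyadicPt T j m ∈ Set.Icc 0 T := by
  have hm' : (m : ℝ) ≤ 2 ^ j := by exact_mod_cast hm
  refine ⟨by unfold dyadicPt; positivity, ?_⟩
  rw [dyadicPt, div_le_iff₀ (by positivity)]
  nlinarith

theorem abs_sub_dyadicPt_dyadicIdx_le (hT : 0 < T) (ht : 0 ≤ t) (j : ℕ) :
    |t - dyadicPt T j (dyadicIdx T t j)| ≤ T / 2 ^ j := by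
  have hlo : (dyadicIdx T t j : ℝ) * T ≤ t * 2 ^ j :=
    (le_div_iff₀ hT).1 (Nat.floor_le (by positivity))
  have hhi : t * 2 ^ j < (dyadicIdx T t j + 1) * T :=
    (div_lt_iff₀ hT).1 (Nat.lt_floor_add_one _)
  generalize dyadicIdx T t j = m at hlo hhi
  have h2 : (0 : ℝ) < 2 ^ j := by positivity
  have e : t - m * T / 2 ^ j = (t * 2 ^ j - m * T) / 2 ^ j := by field_simp
  rw [dyadicPt, e, abs_div, abs_of_pos h2, div_le_div_iff_of_pos_right h2, abs_le]
  constructor <;> nlinarith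

theorem abs_dyadicPt_sub_dyadicPt_div_two_le (hT : 0 ≤ T) (j m : ℕ) :
    |dyadicPt T (j + 1) m - dyadicPt T j (m / 2)| ≤ T / 2 ^ (j + 1) := by
  have hlo : ((m / 2 : ℕ) : ℝ) * 2 ≤ m := by exact_mod_cast Nat.div_mul_le_self m 2
  have hhi : (m : ℝ) ≤ ((m / 2 : ℕ) : ℝ) * 2 + 1 := by
    exact_mod_cast (by omega : m ≤ m / 2 * 2 + 1)
  rw [dyadicPt, dyadicPt]
  generalize ((m / 2 : ℕ) : ℝ) = q at hlo hhi ⊢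
  have h2 : (0 : ℝ) < 2 ^ (j + 1) := by positivity
  have e : m * T / 2 ^ (j + 1) - q * T / 2 ^ j = (m - 2 * q) * T / 2 ^ (j + 1) := by
    field_simp; ring
  rw [e, abs_div, abs_of_pos h2, div_le_div_iff_of_pos_right h2, abs_le]
  constructor <;> nlinarith

theorem abs_le_chainIncr (f : ℝ → ℝ) (hT : 0 < T) (ht : t ∈ Set.Icc 0 T) (J : ℕ) :
    |f t| ≤ |f t - f (dyadicPt T J (dyadicIdx T t J))| + (|f 0| + |f T|) +
      ∑ j ∈ range J, chainIncr f T j := by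
  set F : ℕ → ℝ := fun j => f (dyadicPt T j (dyadicIdx T t j))
  have hstep : ∀ j, |F (j + 1) - F j| ≤ chainIncr f T j := fun j => by
    have hmem : dyadicIdx T t (j + 1) ∈ range (2 ^ (j + 1) + 1) :=
      mem_range_succ_iff.2 (dyadicIdx_le hT ht.2 _)
    rw [chainIncr, ← Real.sqrt_sq_eq_abs]
    refine Real.sqrt_le_sqrt (le_of_eq_of_le ?_ (single_le_sum (fun m _ => sq_nonneg _) hmem))
    simp only [F, dyadicIdx_succ_div_two]
  have hstart : |F 0| ≤ |f 0| + |f T| := by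
    rcases Nat.le_one_iff_eq_zero_or_eq_one.1 (dyadicIdx_le hT ht.2 0) with h | h <;>
      simp [F, h, dyadicPt]
  calc |f t| ≤ |f t - F J| + |F J| := by linarith [abs_sub_abs_le_abs_sub (f t) (F J)]
    _ = |f t - F J| + |F 0 + ∑ j ∈ range J, (F (j + 1) - F j)| := by
      rw [sum_range_sub, add_sub_cancel]
    _ ≤ |f t - F J| + (|F 0| + ∑ j ∈ range J, |F (j + 1) - F j|) := by
      gcongr
      exact (abs_add_le _ _).trans (by gcongr; exact abs_sum_le_sum_abs _ _)
    _ ≤ _ := by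
      rw [← add_assoc]
      gcongr with j
      exact hstep j

end Dyadic

theorem Monotone.exists_mem_Icc_castSucc_succ {d : ℕ} (hd : 0 < d) {pts : Fin (d + 1) → ℝ}
    (hmono : Monotone pts) {t : ℝ} (ht : t ∈ Set.Icc (pts 0) (pts (Fin.last d))) :
    ∃ i : Fin d, t ∈ Set.Icc (pts i.castSucc) (pts i.succ) := by
  have hP : ∃ k, ∃ hk : k < d + 1, t ≤ pts ⟨k, hk⟩ := ⟨d, d.lt_succ_self, ht.2⟩
  obtain ⟨hk, htk⟩ := Nat.find_spec hP
  have hmin := fun m => Nat.find_min hP (m := m)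
  generalize Nat.find hP = k at hk htk hmin
  rcases k with _ | j
  · exact ⟨⟨0, hd⟩, ht.1, htk.trans (hmono (Fin.zero_le _))⟩
  · refine ⟨⟨j, by omega⟩, ?_, htk⟩
    simp only [not_exists, not_le] at hmin
    exact (hmin j j.lt_succ_self (by omega)).le

theorem abs_interp_sub_le {a b t : ℝ} (hab : a < b) (ht : t ∈ Set.Icc a b) (ya yb y : ℝ) :
    |ya + (yb - ya) / (b - a) * (t - a) - y| ≤ |ya - y| + |yb - y| := by
  set θ := (t - a) / (b - a)
  have hθ0 : 0 ≤ θ := div_nonneg (by linarith [ht.1]) (by linarith)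
  have hθ1 : θ ≤ 1 := (div_le_one (by linarith)).2 (by linarith [ht.2])
  have hconvex : ya + (yb - ya) / (b - a) * (t - a) - y = (1 - θ) * (ya - y) + θ * (yb - y) := by
    simp only [θ]; field_simp; ring
  rw [hconvex]
  calc |(1 - θ) * (ya - y) + θ * (yb - y)| ≤ (1 - θ) * |ya - y| + θ * |yb - y| := by
        refine (abs_add_le _ _).trans_eq ?_
        rw [abs_mul, abs_mul, abs_of_nonneg (by linarith), abs_of_nonneg hθ0]
    _ ≤ |ya - y| + |yb - y| := by nlinarith [abs_nonneg (ya - y), abs_nonneg (yb - y)]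

theorem sub_le_meshR {d : ℕ} (hd : 0 < d) (pts : Fin (d + 1) → ℝ) (i : Fin d) :
    pts i.succ - pts i.castSucc ≤ meshR d hd pts :=
  (le_abs_self _).trans (le_sup' (fun i : Fin d => |pts i.succ - pts i.castSucc|) (mem_univ i))

theorem natCast_mul_div_two_pow_rpow_le {T γ : ℝ} (hT : 0 ≤ T) (hγ : 1 ≤ γ) (n : ℕ) :
    n * (T / 2 ^ n) ^ γ ≤ T ^ γ := by
  have h2n : (1 : ℝ) ≤ 2 ^ n := one_le_pow₀ one_le_two
  have hn : (n : ℝ) ≤ (2 ^ n) ^ γ := calc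
    (n : ℝ) ≤ 2 ^ n := by exact_mod_cast n.lt_two_pow_self.le
    _ = (2 ^ n) ^ (1 : ℝ) := (Real.rpow_one _).symm
    _ ≤ (2 ^ n) ^ γ := Real.rpow_le_rpow_of_exponent_le h2n hγ
  rw [Real.div_rpow hT (by positivity), mul_div_assoc', div_le_iff₀ (by positivity), mul_comm]
  gcongr

theorem card_mul_div_two_pow_rpow_le {T β : ℝ} (hT : 0 ≤ T) (j : ℕ) :
    ((2 ^ (j + 1) + 1 : ℕ) : ℝ) * (T / 2 ^ (j + 1)) ^ (2 * β) ≤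
      2 * T ^ (2 * β) * ((2 : ℝ) ^ (1 - 2 * β)) ^ (j + 1) := by
  have hcard : ((2 ^ (j + 1) + 1 : ℕ) : ℝ) ≤ 2 * 2 ^ (j + 1) := by
    push_cast; linarith [one_le_pow₀ (M₀ := ℝ) one_le_two (n := j + 1)]
  rw [Real.div_rpow hT (by positivity), ← Real.rpow_pow_comm zero_le_two,
    Real.rpow_sub two_pos, Real.rpow_one, div_pow]
  calc ((2 ^ (j + 1) + 1 : ℕ) : ℝ) * (T ^ (2 * β) / (2 ^ (2 * β)) ^ (j + 1))
      ≤ 2 * 2 ^ (j + 1) * (T ^ (2 * β) / (2 ^ (2 * β)) ^ (j + 1)) := by gcongr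
    _ = _ := by ring

theorem sum_sqrt_mul_pow_succ_le {c ρ : ℝ} (hc : 0 ≤ c) (hρ0 : 0 ≤ ρ) (hρ1 : ρ < 1) (J : ℕ) :
    ∑ j ∈ range J, √(c * ρ ^ (j + 1)) ≤ √c * (1 - √ρ)⁻¹ := by
  have hr1 : √ρ < 1 := (Real.sqrt_lt_sqrt hρ0 hρ1).trans_eq Real.sqrt_one
  have hpow : ∀ m : ℕ, √(ρ ^ m) = √ρ ^ m := fun m => by
    rw [← Real.sqrt_sq (pow_nonneg (Real.sqrt_nonneg ρ) m), ← pow_mul, mul_comm, pow_mul,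
      Real.sq_sqrt hρ0]
  simp only [Real.sqrt_mul hc, hpow, ← mul_sum]
  gcongr
  calc ∑ j ∈ range J, √ρ ^ (j + 1) ≤ ∑ j ∈ range J, √ρ ^ j :=
        sum_le_sum fun j _ => pow_le_pow_of_le_one (Real.sqrt_nonneg _) hr1.le j.le_succ
    _ ≤ √ρ ^ 0 / (1 - √ρ) := by
        rw [range_eq_Ico]; exact geom_sum_Ico_le_of_lt_one (Real.sqrt_nonneg _) hr1
    _ = (1 - √ρ)⁻¹ := by rw [pow_zero, one_div]

structure IsGridInterpolant (T : ℝ) {d : ℕ} (pts : Fin (d + 1) → ℝ) (Y Ytil : ℕ → ℝ → ℝ) :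
    Prop where
  strictMono : StrictMono pts
  first : pts 0 = 0
  last : pts (Fin.last d) = T
  eq : ∀ k (i : Fin d), ∀ t ∈ Set.Icc (pts i.castSucc) (pts i.succ),
    Ytil k t = Y k (pts i.castSucc) +
      (Y k (pts i.succ) - Y k (pts i.castSucc)) / (pts i.succ - pts i.castSucc) *
        (t - pts i.castSucc)

section FixedPopulation

variable {N n d : ℕ} {p : Finset ℕ → ℝ} {lam C₁ C₂ C₃ T β h : ℝ} {Y Ytil : ℕ → ℝ → ℝ}
  {pts : Fin (d + 1) → ℝ}

theorem IsGridInterpolant.mean_abs_sub_le (hgrid : IsGridInterpolant T pts Y Ytil)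
    (hd : 0 < d) (hgap : ∀ i : Fin d, pts i.succ - pts i.castSucc ≤ h)
    (hY : HolderMeanSq N Y T C₃ β) (hC₃ : 0 ≤ C₃) (hβ : 0 ≤ β) {t : ℝ} (ht : t ∈ Set.Icc 0 T) :
    (N : ℝ)⁻¹ * ∑ k ∈ range N, |Ytil k t - Y k t| ≤ 2 * √(C₃ * h ^ (2 * β)) := by
  obtain ⟨i, hi⟩ := hgrid.strictMono.monotone.exists_mem_Icc_castSucc_succ hd
    (by rwa [hgrid.first, hgrid.last])
  have hlt : pts i.castSucc < pts i.succ := hgrid.strictMono i.castSucc_lt_succ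
  have hnode : ∀ j : Fin (d + 1), pts j ∈ Set.Icc 0 T := fun j => by
    rw [← hgrid.first, ← hgrid.last]
    exact ⟨hgrid.strictMono.monotone (Fin.zero_le j), hgrid.strictMono.monotone (Fin.le_last j)⟩
  have hnear : ∀ j, pts j ∈ Set.Icc (pts i.castSucc) (pts i.succ) →
      (N : ℝ)⁻¹ * ∑ k ∈ range N, |Y k (pts j) - Y k t| ≤ √(C₃ * h ^ (2 * β)) := fun j hj =>
    (mean_abs_le_sqrt_popMeanSq N _).trans <| Real.sqrt_le_sqrt <|
      hY.le_of_abs_sub_le hC₃ hβ ht (hnode j) ((Real.dist_le_of_mem_Icc hj hi).trans (hgap i))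
  calc (N : ℝ)⁻¹ * ∑ k ∈ range N, |Ytil k t - Y k t|
      ≤ (N : ℝ)⁻¹ * ∑ k ∈ range N,
          (|Y k (pts i.castSucc) - Y k t| + |Y k (pts i.succ) - Y k t|) := by
        gcongr with k
        rw [hgrid.eq k i t hi]
        exact abs_interp_sub_le hlt hi _ _ _
    _ = (N : ℝ)⁻¹ * ∑ k ∈ range N, |Y k (pts i.castSucc) - Y k t| +
          (N : ℝ)⁻¹ * ∑ k ∈ range N, |Y k (pts i.succ) - Y k t| := by
        rw [sum_add_distrib, mul_add]
    _ ≤ √(C₃ * h ^ (2 * β)) + √(C₃ * h ^ (2 * β)) :=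
        add_le_add (hnear _ (Set.left_mem_Icc.2 hlt.le)) (hnear _ (Set.right_mem_Icc.2 hlt.le))
    _ = 2 * √(C₃ * h ^ (2 * β)) := by ring

theorem abs_htMean_sub_htMean_le (hlam : 0 < lam) (hpi : ∀ k ∈ range N, lam ≤ pi1 N p k)
    (hgrid : IsGridInterpolant T pts Y Ytil) (hd : 0 < d)
    (hgap : ∀ i : Fin d, pts i.succ - pts i.castSucc ≤ h) (hY : HolderMeanSq N Y T C₃ β)
    (hC₃ : 0 ≤ C₃) (hβ : 0 ≤ β) {s : Finset ℕ} (hs : s ⊆ range N) {t : ℝ}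
    (ht : t ∈ Set.Icc 0 T) :
    |htMean N p Ytil s t - htMean N p Y s t| ≤ 2 * lam⁻¹ * √(C₃ * h ^ (2 * β)) := by
  have hdiff : htMean N p Ytil s t - htMean N p Y s t =
      (N : ℝ)⁻¹ * ∑ k ∈ s, (Ytil k t - Y k t) / pi1 N p k := by
    simp only [htMean, ← mul_sub, ← sum_sub_distrib, sub_div]
  rw [hdiff, mul_right_comm, mul_comm _ lam⁻¹]
  exact (abs_htSum_le hlam hpi hs _).trans
    (mul_le_mul_of_nonneg_left (hgrid.mean_abs_sub_le hd hgap hY hC₃ hβ ht) (by positivity))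

theorem abs_htErr_sub_dyadic_le (hlam : 0 < lam) (hpi : ∀ k ∈ range N, lam ≤ pi1 N p k)
    (hY : HolderMeanSq N Y T C₃ β) (hT : 0 < T) (hC₃ : 0 ≤ C₃) (hβ : 0 ≤ β) {s : Finset ℕ}
    (hs : s ⊆ range N) {t : ℝ} (ht : t ∈ Set.Icc 0 T) (J : ℕ) :
    |htErr N p (fun k => Y k t) s - htErr N p (fun k => Y k (dyadicPt T J (dyadicIdx T t J))) s|
      ≤ (1 + lam⁻¹) * √(C₃ * (T / 2 ^ J) ^ (2 * β)) := by
  rw [← htErr_sub]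
  refine (abs_htErr_le hlam hpi hs _).trans ?_
  gcongr
  refine hY.le_of_abs_sub_le hC₃ hβ ?_ ht ?_
  · exact dyadicPt_mem_Icc hT.le (dyadicIdx_le hT ht.2 J)
  · exact abs_sub_dyadicPt_dyadicIdx_le hT ht.1 J

theorem abs_htMean_sub_popMean_le (hlam : 0 < lam) (hpi : ∀ k ∈ range N, lam ≤ pi1 N p k)
    (hgrid : IsGridInterpolant T pts Y Ytil) (hd : 0 < d)
    (hgap : ∀ i : Fin d, pts i.succ - pts i.castSucc ≤ h) (hY : HolderMeanSq N Y T C₃ β)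
    (hT : 0 < T) (hC₃ : 0 ≤ C₃) (hβ : 0 ≤ β) {s : Finset ℕ} (hs : s ⊆ range N) (J : ℕ) {t : ℝ}
    (ht : t ∈ Set.Icc 0 T) :
    |htMean N p Ytil s t - popMean N Y t| ≤
      2 * lam⁻¹ * √(C₃ * h ^ (2 * β)) + (1 + lam⁻¹) * √(C₃ * (T / 2 ^ J) ^ (2 * β)) +
        (|htErr N p (fun k => Y k 0) s| + |htErr N p (fun k => Y k T) s|) +
        ∑ j ∈ range J, chainIncr (fun u => htErr N p (fun k => Y k u) s) T j := by
  have hsplit : htMean N p Ytil s t - popMean N Y t =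
      (htMean N p Ytil s t - htMean N p Y s t) + htErr N p (fun k => Y k t) s := by
    simp only [htErr, htMean, popMean]; ring
  have hinterp := abs_htMean_sub_htMean_le hlam hpi hgrid hd hgap hY hC₃ hβ hs ht
  have htail := abs_htErr_sub_dyadic_le hlam hpi hY hT hC₃ hβ hs ht J
  have hchain := abs_le_chainIncr (fun u => htErr N p (fun k => Y k u) s) hT ht J
  rw [hsplit]
  refine (abs_add_le _ _).trans ?_
  linarith

theorem IsDesign.sqrt_mul_dExp_chainIncr_le (hd : IsDesign N n p) (hlam : 0 < lam)
    (hpi : ∀ k ∈ range N, lam ≤ pi1 N p k) (hC₁ : 0 ≤ C₁)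
    (hΔ : ∀ k ∈ range N, ∀ l ∈ range N, k ≠ l → (n : ℝ) * |Delta N p k l| ≤ C₁)
    (hY : HolderMeanSq N Y T C₃ β) (hT : 0 < T) (hC₃ : 0 ≤ C₃) (hβ : 0 ≤ β) (j : ℕ) :
    √n * dExp N p (fun s => chainIncr (fun u => htErr N p (fun k => Y k u) s) T j) ≤
      √(2 * (lam⁻¹ + C₁ * lam⁻¹ ^ 2) * C₃ * T ^ (2 * β) * ((2 : ℝ) ^ (1 - 2 * β)) ^ (j + 1)) := by
  set K := lam⁻¹ + C₁ * lam⁻¹ ^ 2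
  have hK : 0 ≤ K := add_nonneg (inv_nonneg.2 hlam.le) (mul_nonneg hC₁ (sq_nonneg _))
  set D : ℕ → ℕ → ℝ := fun m k => Y k (dyadicPt T (j + 1) m) - Y k (dyadicPt T j (m / 2))
  have hincr : ∀ s, chainIncr (fun u => htErr N p (fun k => Y k u) s) T j =
      √(∑ m ∈ range (2 ^ (j + 1) + 1), htErr N p (D m) s ^ 2) := fun s => by
    simp only [chainIncr, D, htErr_sub]
  have hD : ∀ m ∈ range (2 ^ (j + 1) + 1),
      n * dExp N p (fun s => htErr N p (D m) s ^ 2) ≤ K * (C₃ * (T / 2 ^ (j + 1)) ^ (2 * β)) := by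
    intro m hm
    have hm' : m ≤ 2 ^ (j + 1) := mem_range_succ_iff.1 hm
    refine (hd.natCast_mul_dExp_htErr_sq_le hlam hpi hC₁ hΔ _).trans ?_
    gcongr
    refine hY.le_of_abs_sub_le hC₃ hβ (dyadicPt_mem_Icc hT.le ?_) (dyadicPt_mem_Icc hT.le hm')
      (abs_dyadicPt_sub_dyadicPt_div_two_le hT.le j m)
    rw [pow_succ] at hm'
    omega
  calc √n * dExp N p (fun s => chainIncr (fun u => htErr N p (fun k => Y k u) s) T j)
      ≤ √n * √(dExp N p (fun s => ∑ m ∈ range (2 ^ (j + 1) + 1), htErr N p (D m) s ^ 2)) := by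
        simp only [hincr]
        gcongr
        exact hd.dExp_sqrt_le fun s => sum_nonneg fun m _ => sq_nonneg _
    _ = √(∑ m ∈ range (2 ^ (j + 1) + 1), n * dExp N p (fun s => htErr N p (D m) s ^ 2)) := by
        rw [← Real.sqrt_mul (Nat.cast_nonneg n), dExp_sum, mul_sum]
    _ ≤ √(∑ m ∈ range (2 ^ (j + 1) + 1), K * (C₃ * (T / 2 ^ (j + 1)) ^ (2 * β))) :=
        Real.sqrt_le_sqrt (sum_le_sum hD)
    _ = √(K * C₃ * (((2 ^ (j + 1) + 1 : ℕ) : ℝ) * (T / 2 ^ (j + 1)) ^ (2 * β))) := by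
        rw [sum_const, card_range, nsmul_eq_mul]; ring_nf
    _ ≤ √(K * C₃ * (2 * T ^ (2 * β) * ((2 : ℝ) ^ (1 - 2 * β)) ^ (j + 1))) :=
        Real.sqrt_le_sqrt (mul_le_mul_of_nonneg_left
          (card_mul_div_two_pow_rpow_le hT.le j) (mul_nonneg hK hC₃))
    _ = _ := by ring_nf

theorem IsDesign.sum_sqrt_mul_dExp_chainIncr_le (hd : IsDesign N n p) (hlam : 0 < lam)
    (hpi : ∀ k ∈ range N, lam ≤ pi1 N p k) (hC₁ : 0 ≤ C₁)
    (hΔ : ∀ k ∈ range N, ∀ l ∈ range N, k ≠ l → (n : ℝ) * |Delta N p k l| ≤ C₁)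
    (hY : HolderMeanSq N Y T C₃ β) (hT : 0 < T) (hC₃ : 0 ≤ C₃) (hβ : 1 / 2 < β) (J : ℕ) :
    ∑ j ∈ range J, √n * dExp N p (fun s => chainIncr (fun u => htErr N p (fun k => Y k u) s) T j)
      ≤ √(2 * (lam⁻¹ + C₁ * lam⁻¹ ^ 2) * C₃ * T ^ (2 * β)) *
          (1 - √((2 : ℝ) ^ (1 - 2 * β)))⁻¹ := by
  have hK : 0 ≤ lam⁻¹ + C₁ * lam⁻¹ ^ 2 :=
    add_nonneg (inv_nonneg.2 hlam.le) (mul_nonneg hC₁ (sq_nonneg _))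
  refine (sum_le_sum fun j _ =>
    hd.sqrt_mul_dExp_chainIncr_le hlam hpi hC₁ hΔ hY hT hC₃ (by linarith) j).trans ?_
  exact sum_sqrt_mul_pow_succ_le (by positivity) (by positivity)
    (Real.rpow_lt_one_of_one_lt_of_neg one_lt_two (by linarith)) J

theorem IsDesign.dExp_iSup_le (hd : IsDesign N n p) (hlam : 0 < lam)
    (hpi : ∀ k ∈ range N, lam ≤ pi1 N p k) (hgrid : IsGridInterpolant T pts Y Ytil) (hdpos : 0 < d)
    (hgap : ∀ i : Fin d, pts i.succ - pts i.castSucc ≤ h) (hY : HolderMeanSq N Y T C₃ β)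
    (hT : 0 < T) (hC₃ : 0 ≤ C₃) (hβ : 0 ≤ β) (J : ℕ) :
    dExp N p (fun s => ⨆ t : Set.Icc (0 : ℝ) T, |htMean N p Ytil s t - popMean N Y t|) ≤
      2 * lam⁻¹ * √(C₃ * h ^ (2 * β)) + (1 + lam⁻¹) * √(C₃ * (T / 2 ^ J) ^ (2 * β)) +
        (dExp N p (fun s => |htErr N p (fun k => Y k 0) s|) +
          dExp N p (fun s => |htErr N p (fun k => Y k T) s|)) +
        ∑ j ∈ range J,
          dExp N p (fun s => chainIncr (fun u => htErr N p (fun k => Y k u) s) T j) := by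
  have : Nonempty (Set.Icc (0 : ℝ) T) := ⟨⟨0, Set.left_mem_Icc.2 hT.le⟩⟩
  refine (dExp_mono hd.nonneg fun s hs => ciSup_le fun t => abs_htMean_sub_popMean_le
    hlam hpi hgrid hdpos hgap hY hT hC₃ hβ (hd.supp s hs).1 J t.2).trans_eq ?_
  rw [dExp_add, dExp_add, dExp_add, dExp_add, dExp_sum, hd.dExp_const, hd.dExp_const]

theorem IsDesign.sqrt_mul_dExp_iSup_le (hd : IsDesign N n p) (hlam : 0 < lam)
    (hpi : ∀ k ∈ range N, lam ≤ pi1 N p k) (hC₁ : 0 ≤ C₁)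
    (hΔ : ∀ k ∈ range N, ∀ l ∈ range N, k ≠ l → (n : ℝ) * |Delta N p k l| ≤ C₁)
    (hgrid : IsGridInterpolant T pts Y Ytil) (hdpos : 0 < d)
    (hgap : ∀ i : Fin d, pts i.succ - pts i.castSucc ≤ h) (hY : HolderMeanSq N Y T C₃ β)
    (hY0 : popMeanSq N (fun k => Y k 0) ≤ C₂) (hT : 0 < T) (hC₃ : 0 ≤ C₃) (hβ : 1 / 2 < β) :
    √n * dExp N p (fun s => ⨆ t : Set.Icc (0 : ℝ) T, |htMean N p Ytil s t - popMean N Y t|) ≤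
      2 * lam⁻¹ * √(C₃ * (n * h ^ (2 * β))) + ((1 + lam⁻¹) * √(C₃ * T ^ (2 * β)) +
        2 * √((lam⁻¹ + C₁ * lam⁻¹ ^ 2) * (2 * C₂ + 2 * (C₃ * T ^ (2 * β)))) +
        √(2 * (lam⁻¹ + C₁ * lam⁻¹ ^ 2) * C₃ * T ^ (2 * β)) * (1 - √((2 : ℝ) ^ (1 - 2 * β)))⁻¹) := by
  have hβ0 : 0 ≤ β := by linarith
  have hK : 0 ≤ lam⁻¹ + C₁ * lam⁻¹ ^ 2 :=
    add_nonneg (inv_nonneg.2 hlam.le) (mul_nonneg hC₁ (sq_nonneg _))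
  have hend : ∀ u ∈ Set.Icc 0 T, √n * dExp N p (fun s => |htErr N p (fun k => Y k u) s|) ≤
      √((lam⁻¹ + C₁ * lam⁻¹ ^ 2) * (2 * C₂ + 2 * (C₃ * T ^ (2 * β)))) := fun u hu =>
    (hd.sqrt_mul_dExp_abs_htErr_le hlam hpi hC₁ hΔ _).trans <|
      Real.sqrt_le_sqrt (mul_le_mul_of_nonneg_left (hY.popMeanSq_le hY0 hC₃ hβ0 hu) hK)
  have hinterp : √n * (2 * lam⁻¹ * √(C₃ * h ^ (2 * β))) =
      2 * lam⁻¹ * √(C₃ * (n * h ^ (2 * β))) := by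
    rw [mul_left_comm C₃, Real.sqrt_mul n.cast_nonneg]; ring
  have htail : √n * ((1 + lam⁻¹) * √(C₃ * (T / 2 ^ n) ^ (2 * β))) ≤
      (1 + lam⁻¹) * √(C₃ * T ^ (2 * β)) := by
    rw [mul_left_comm, ← Real.sqrt_mul n.cast_nonneg, mul_left_comm]
    gcongr
    exact natCast_mul_div_two_pow_rpow_le hT.le (by linarith) n
  have hsup := mul_le_mul_of_nonneg_left
    (hd.dExp_iSup_le hlam hpi hgrid hdpos hgap hY hT hC₃ hβ0 n) (Real.sqrt_nonneg n)
  rw [mul_add, mul_add, mul_add, mul_add, mul_sum, hinterp] at hsup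
  linarith [hend 0 (Set.left_mem_Icc.2 hT.le), hend T (Set.right_mem_Icc.2 hT.le),
    hd.sum_sqrt_mul_dExp_chainIncr_le hlam hpi hC₁ hΔ hY hT hC₃ hβ n]

end FixedPopulation

theorem prop1_uniform_consistency_general
    (T lam C₁ C₂ C₃ β : ℝ)
    (Y : ℕ → ℝ → ℝ) (nseq : ℕ → ℕ) (p : ℕ → Finset ℕ → ℝ)
    (hT : 0 < T)
    (hdes : ∀ N, IsDesign N (nseq N) (p N))
    -- Assumption 2
    (hlam : 0 < lam)
    (hA2a : ∀ N, ∀ k ∈ Finset.range N, lam ≤ pi1 N (p N) k)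
    (hC₁ : 0 < C₁)
    (hA2c : ∀ N, ∀ k ∈ Finset.range N, ∀ l ∈ Finset.range N, k ≠ l →
      (nseq N : ℝ) * |Delta N (p N) k l| ≤ C₁)
    -- Assumption 4
    (hβ : 1 / 2 < β) (hC₃ : 0 < C₃)
    (hA4a : ∀ N : ℕ, (N : ℝ)⁻¹ * ∑ k ∈ Finset.range N, Y k 0 ^ 2 < C₂)
    (hA4b : ∀ N : ℕ, ∀ s ∈ Set.Icc (0 : ℝ) T, ∀ t ∈ Set.Icc (0 : ℝ) T,
      (N : ℝ)⁻¹ * ∑ k ∈ Finset.range N, (Y k t - Y k s) ^ 2 ≤ C₃ * |t - s| ^ (2 * β))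
    -- discretization scheme and linear interpolation
    (dsc : ℕ → ℕ) (hdsc : ∀ N, 0 < dsc N)
    (pts : (N : ℕ) → Fin (dsc N + 1) → ℝ)
    (hmono : ∀ N, StrictMono (pts N))
    (hpts0 : ∀ N, pts N 0 = 0) (hptsT : ∀ N, pts N (Fin.last (dsc N)) = T)
    (Ytil : ℕ → ℕ → ℝ → ℝ)
    (hinterp : ∀ N k (i : Fin (dsc N)),
      ∀ t ∈ Set.Icc (pts N i.castSucc) (pts N i.succ),
        Ytil N k t = Y k (pts N i.castSucc) +
          (Y k (pts N i.succ) - Y k (pts N i.castSucc)) /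
            (pts N i.succ - pts N i.castSucc) * (t - pts N i.castSucc))
    -- the discretization scheme satisfies max_i |t_{i+1}-t_i|^{2β} = o(n⁻¹)
    (hmesh : Tendsto (fun N => (nseq N : ℝ) * meshR (dsc N) (hdsc N) (pts N) ^ (2 * β))
      atTop (𝓝 0)) :
    ∃ C : ℝ, 0 < C ∧ ∀ N,
      Real.sqrt (nseq N) * dExp N (p N) (fun sam =>
          ⨆ t : Set.Icc (0 : ℝ) T,
            |htMean N (p N) (Ytil N) sam t - popMean N Y t|) < C := by
  obtain ⟨M, hM⟩ := hmesh.bddAbove_range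
  set K := lam⁻¹ + C₁ * lam⁻¹ ^ 2
  set b := (1 + lam⁻¹) * √(C₃ * T ^ (2 * β)) +
    2 * √(K * (2 * C₂ + 2 * (C₃ * T ^ (2 * β)))) +
    √(2 * K * C₃ * T ^ (2 * β)) * (1 - √((2 : ℝ) ^ (1 - 2 * β)))⁻¹
  have hρ : 0 < 1 - √((2 : ℝ) ^ (1 - 2 * β)) := sub_pos.2 <| (Real.sqrt_lt' one_pos).2 <| by
    rw [one_pow]; exact Real.rpow_lt_one_of_one_lt_of_neg one_lt_two (by linarith)
  refine ⟨2 * lam⁻¹ * √(C₃ * M) + b + 1, by positivity, fun N => ?_⟩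
  have hgrid : IsGridInterpolant T (pts N) Y (Ytil N) := ⟨hmono N, hpts0 N, hptsT N, hinterp N⟩
  calc _ ≤ 2 * lam⁻¹ * √(C₃ * (nseq N * meshR (dsc N) (hdsc N) (pts N) ^ (2 * β))) + b :=
        (hdes N).sqrt_mul_dExp_iSup_le hlam (hA2a N) hC₁.le (hA2c N) hgrid (hdsc N)
          (sub_le_meshR (hdsc N) (pts N)) (hA4b N) (hA4a N).le hT hC₃.le hβ
    _ < 2 * lam⁻¹ * √(C₃ * M) + b + 1 := by
        refine lt_of_le_of_lt ?_ (lt_add_one _)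
        gcongr
        exact hM ⟨N, rfl⟩

/-- Proposition 1: under Assumptions 1–4, if the discretization scheme
satisfies `max_i |t_{i+1} - t_i|^{2β} = o(n⁻¹)`, then there exists a constant `C` such that
for all `N`, `√n · E[sup_{t ∈ [0,T]} |μ̂_d(t) - μ_N(t)|] < C`. -/
theorem prop1_uniform_consistency
    (T πlim lam lamstar C₁ C₂ C₃ β : ℝ) (μ : ℝ → ℝ)
    (Y : ℕ → ℝ → ℝ) (nseq : ℕ → ℕ) (p : ℕ → Finset ℕ → ℝ)
    (hT : 0 < T)
    (hdes : ∀ N, IsDesign N (nseq N) (p N))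
    -- Assumption 1
    (hA1 : Tendsto (fun N => (nseq N : ℝ) / (N : ℝ)) atTop (𝓝 πlim))
    (hπ0 : 0 < πlim) (hπ1 : πlim < 1)
    -- Assumption 2
    (hlam : 0 < lam)
    (hA2a : ∀ N, ∀ k ∈ Finset.range N, lam ≤ pi1 N (p N) k)
    (hlamstar : 0 < lamstar)
    (hA2b : ∀ N, ∀ k ∈ Finset.range N, ∀ l ∈ Finset.range N, k ≠ l →
      lamstar ≤ pi2 N (p N) k l)
    (hC₁ : 0 < C₁)
    (hA2c : ∀ N, ∀ k ∈ Finset.range N, ∀ l ∈ Finset.range N, k ≠ l →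
      (nseq N : ℝ) * |Delta N (p N) k l| ≤ C₁)
    -- Assumption 3
    (hA3a : ∀ k, ContinuousOn (Y k) (Set.Icc 0 T))
    (hA3b : ContinuousOn μ (Set.Icc 0 T))
    (hA3c : TendstoUniformlyOn (fun N t => popMean N Y t) μ atTop (Set.Icc 0 T))
    -- Assumption 4
    (hβ : 1 / 2 < β) (hC₂ : 0 < C₂) (hC₃ : 0 < C₃)
    (hA4a : ∀ N : ℕ, (N : ℝ)⁻¹ * ∑ k ∈ Finset.range N, Y k 0 ^ 2 < C₂)
    (hA4b : ∀ N : ℕ, ∀ s ∈ Set.Icc (0 : ℝ) T, ∀ t ∈ Set.Icc (0 : ℝ) T,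
      (N : ℝ)⁻¹ * ∑ k ∈ Finset.range N, (Y k t - Y k s) ^ 2 ≤ C₃ * |t - s| ^ (2 * β))
    -- discretization scheme and linear interpolation
    (dsc : ℕ → ℕ) (hdsc : ∀ N, 0 < dsc N)
    (pts : (N : ℕ) → Fin (dsc N + 1) → ℝ)
    (hmono : ∀ N, StrictMono (pts N))
    (hpts0 : ∀ N, pts N 0 = 0) (hptsT : ∀ N, pts N (Fin.last (dsc N)) = T)
    (Ytil : ℕ → ℕ → ℝ → ℝ)
    (hinterp : ∀ N k (i : Fin (dsc N)),
      ∀ t ∈ Set.Icc (pts N i.castSucc) (pts N i.succ),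
        Ytil N k t = Y k (pts N i.castSucc) +
          (Y k (pts N i.succ) - Y k (pts N i.castSucc)) /
            (pts N i.succ - pts N i.castSucc) * (t - pts N i.castSucc))
    -- the discretization scheme satisfies max_i |t_{i+1}-t_i|^{2β} = o(n⁻¹)
    (hmesh : Tendsto (fun N => (nseq N : ℝ) * meshR (dsc N) (hdsc N) (pts N) ^ (2 * β))
      atTop (𝓝 0)) :
    ∃ C : ℝ, 0 < C ∧ ∀ N,
      Real.sqrt (nseq N) * dExp N (p N) (fun sam =>
          ⨆ t : Set.Icc (0 : ℝ) T,
            |htMean N (p N) (Ytil N) sam t - popMean N Y t|) < C :=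
  prop1_uniform_consistency_general T lam C₁ C₂ C₃ β Y nseq p hT hdes hlam hA2a hC₁ hA2c hβ hC₃ hA4a
    hA4b dsc hdsc pts hmono hpts0 hptsT Ytil hinterp hmesh
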